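/- arXiv:1809.01871 — 5 statements merged into one kernel-verified Lean document; each statement's English description precedes it below -/
import Mathlib

section
/- For a nonzero point x₀ in a finite-dimensional real normed space X, x₀ has a unique support functional if and only if the norm function x ↦ ‖x‖ is (Fréchet) differentiable at x₀. -/
/-!
The norming functionals of `x` (norm at most one, value `‖x‖` at `x`) are
subgradients of the norm at `x`, and support functionals are their multiples by `‖x‖`.
If the norm is differentiable at `x₀`, every subgradient equals the derivative, since
`‖·‖ - g` is minimal at `x₀`. Conversely, if `g` is the only norming functional of `x₀`,
pick norming functionals `φ x` of every `x`: the subgradient inequality squeezes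
`‖x‖ - ‖x₀‖ - g (x - x₀)` between `0` and `(φ x - g) (x - x₀)`, and `φ x → g` as `x → x₀`
because the dual unit ball is compact and every cluster point of `φ` at `x₀` is norming at `x₀`.
-/

open Filter Topology

section

variable {X : Type*} [NormedAddCommGroup X] [NormedSpace ℝ X]

def IsNormingFunctional (x : X) (g : X →L[ℝ] ℝ) : Prop :=
  ‖g‖ ≤ 1 ∧ g x = ‖x‖

theorem isClosed_setOf_isNormingFunctional :
    IsClosed {p : X × (X →L[ℝ] ℝ) | IsNormingFunctional p.1 p.2} :=
  (isClosed_le continuous_snd.norm continuous_const).inter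
    (isClosed_eq (continuous_snd.clm_apply continuous_fst) continuous_fst.norm)

theorem IsNormingFunctional.apply_sub_le {x : X} {g : X →L[ℝ] ℝ} (hg : IsNormingFunctional x g)
    (y : X) : g (y - x) ≤ ‖y‖ - ‖x‖ := by
  have hgy : g y ≤ ‖y‖ :=
    calc g y ≤ ‖g‖ * ‖y‖ := (le_abs_self _).trans (g.le_opNorm y)
      _ ≤ 1 * ‖y‖ := by gcongr; exact hg.1
      _ = ‖y‖ := one_mul _
  rw [map_sub, hg.2]
  linarith

theorem isNormingFunctional_iff_smul {x : X} (hx : x ≠ 0) (g : X →L[ℝ] ℝ) :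
    IsNormingFunctional x g ↔ ‖‖x‖ • g‖ = ‖x‖ ∧ (‖x‖ • g) x = ‖x‖ ^ 2 := by
  have hpos : 0 < ‖x‖ := norm_pos_iff.2 hx
  rw [norm_smul, norm_norm, smul_apply, smul_eq_mul, sq,
    mul_right_inj' hpos.ne', mul_eq_left₀ hpos.ne']
  refine ⟨fun hg => ⟨le_antisymm hg.1 ?_, hg.2⟩, fun hg => ⟨hg.1.le, hg.2⟩⟩
  have := (le_abs_self _).trans (g.le_opNorm x)
  rw [hg.2] at this
  exact le_of_mul_le_mul_right (by linarith) hpos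

theorem existsUnique_isNormingFunctional_iff {x : X} (hx : x ≠ 0) :
    (∃! g : X →L[ℝ] ℝ, IsNormingFunctional x g) ↔
      ∃! f : X →L[ℝ] ℝ, ‖f‖ = ‖x‖ ∧ f x = ‖x‖ ^ 2 :=
  (LinearEquiv.smulOfNeZero ℝ (X →L[ℝ] ℝ) ‖x‖ (norm_ne_zero_iff.2 hx)).toEquiv.existsUnique_congr
    (isNormingFunctional_iff_smul hx)

theorem IsNormingFunctional.eq_of_hasFDerivAt {x : X} {g D : X →L[ℝ] ℝ}
    (hg : IsNormingFunctional x g) (hD : HasFDerivAt (fun y : X => ‖y‖) D x) : g = D := by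
  have hmin : IsLocalMin (fun y : X => ‖y‖ - g y) x :=
    Eventually.of_forall fun y => by
      have := hg.apply_sub_le y
      rw [map_sub] at this
      dsimp only
      linarith
  exact (sub_eq_zero.1 (hmin.hasFDerivAt_eq_zero (hD.sub g.hasFDerivAt))).symm

theorem hasFDerivAt_norm_of_tendsto {φ : X → X →L[ℝ] ℝ} {x₀ : X} {g : X →L[ℝ] ℝ}
    (hφ : ∀ x, IsNormingFunctional x (φ x)) (hg : IsNormingFunctional x₀ g)
    (hlim : Tendsto φ (𝓝 x₀) (𝓝 g)) : HasFDerivAt (fun x : X => ‖x‖) g x₀ := by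
  have hbound : ∀ x, ‖‖x‖ - ‖x₀‖ - g (x - x₀)‖ ≤ ‖φ x - g‖ * ‖x - x₀‖ := by
    intro x
    have hlow := hg.apply_sub_le x
    have hup := (hφ x).apply_sub_le x₀
    rw [← neg_sub x x₀, map_neg] at hup
    have hφg : (φ x - g) (x - x₀) ≤ ‖φ x - g‖ * ‖x - x₀‖ :=
      (le_abs_self _).trans ((φ x - g).le_opNorm _)
    rw [sub_apply] at hφg
    rw [Real.norm_eq_abs, abs_le]
    constructor <;> linarith
  refine hasFDerivAt_iff_isLittleO.2 (Asymptotics.isLittleO_iff.2 fun c hc => ?_)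
  filter_upwards [hlim (Metric.closedBall_mem_nhds g hc)] with x hx
  rw [Set.mem_preimage, Metric.mem_closedBall, dist_eq_norm] at hx
  exact (hbound x).trans (by gcongr)

theorem tendsto_of_forall_isNormingFunctional [FiniteDimensional ℝ X] {φ : X → X →L[ℝ] ℝ}
    {x₀ : X} {g : X →L[ℝ] ℝ} (hφ : ∀ x, IsNormingFunctional x (φ x))
    (huniq : ∀ g', IsNormingFunctional x₀ g' → g' = g) : Tendsto φ (𝓝 x₀) (𝓝 g) := by
  refine (isCompact_closedBall (0 : X →L[ℝ] ℝ) 1).tendsto_nhds_of_unique_mapClusterPt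
    (Eventually.of_forall fun x => mem_closedBall_zero_iff.2 (hφ x).1) fun g' _ hg' => huniq g' ?_
  obtain ⟨U, hU, hφU⟩ := mapClusterPt_iff_ultrafilter.1 hg'
  exact isClosed_setOf_isNormingFunctional.mem_of_tendsto
    ((tendsto_id.mono_left hU).prodMk_nhds hφU) (Eventually.of_forall hφ)

end

/-- A nonzero point of a finite-dimensional real normed space has a unique support
functional iff the norm is Fréchet differentiable there. -/
theorem stmt_1 (X : Type*) [NormedAddCommGroup X] [NormedSpace ℝ X]
    [FiniteDimensional ℝ X] (x₀ : X) (hx₀ : x₀ ≠ 0) :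
    (∃! f : X →L[ℝ] ℝ, ‖f‖ = ‖x₀‖ ∧ f x₀ = ‖x₀‖ ^ 2) ↔
      DifferentiableAt ℝ (fun x : X => ‖x‖) x₀ := by
  choose φ hφ using fun x : X => exists_dual_vector'' ℝ x
  have hφ : ∀ x, IsNormingFunctional x (φ x) := hφ
  rw [← existsUnique_isNormingFunctional_iff hx₀]
  constructor
  · rintro ⟨g, hg, huniq⟩
    exact (hasFDerivAt_norm_of_tendsto hφ hg
      (tendsto_of_forall_isNormingFunctional hφ huniq)).differentiableAt
  · intro hd
    have hD := hd.hasFDerivAt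
    exact ⟨φ x₀, hφ x₀, fun g hg =>
      (hg.eq_of_hasFDerivAt hD).trans ((hφ x₀).eq_of_hasFDerivAt hD).symm⟩
end

section
/- The dual map φ, sending each smooth point of a finite-dimensional real normed space X to its unique support functional and 0 to 0, is continuous on the set of smooth points together with 0. -/
/-- The dual map, sending each smooth point to its unique support functional and `0` to
`0`, is continuous on the set of smooth points together with `0`. -/
theorem stmt_4 (X : Type*) [NormedAddCommGroup X] [NormedSpace ℝ X]
    [FiniteDimensional ℝ X] (φ : X → X →L[ℝ] ℝ) (hφ0 : φ 0 = 0)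
    (hφ : ∀ x ∈ {x : X | x ≠ 0 ∧ ∃! f : X →L[ℝ] ℝ, ‖f‖ = ‖x‖ ∧ f x = ‖x‖ ^ 2},
      ‖φ x‖ = ‖x‖ ∧ φ x x = ‖x‖ ^ 2) :
    ContinuousOn φ
      ({x : X | x ≠ 0 ∧ ∃! f : X →L[ℝ] ℝ, ‖f‖ = ‖x‖ ∧ f x = ‖x‖ ^ 2} ∪ {0}) := by
  set S : Set X := {x : X | x ≠ 0 ∧ ∃! f : X →L[ℝ] ℝ, ‖f‖ = ‖x‖ ∧ f x = ‖x‖ ^ 2} with hSdef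
  have hnorm_le : ∀ x ∈ S ∪ {0}, ‖φ x‖ ≤ ‖x‖ := by
    intro x hx
    rcases hx with hx | hx
    · exact le_of_eq (hφ x hx).1
    · simp only [Set.mem_singleton_iff] at hx
      simp [hx, hφ0]
  intro a ha
  rcases ha with haS | ha0
  · -- a is a smooth point
    have ha0 : a ≠ 0 := haS.1
    have hφa := hφ a haS
    rw [ContinuousWithinAt]
    apply Filter.tendsto_of_subseq_tendsto
    intro ns hns
    have hns' : Filter.Tendsto ns Filter.atTop (nhds a) :=
      hns.mono_right nhdsWithin_le_nhds
    have hmem : ∀ᶠ n in Filter.atTop, ns n ∈ S ∪ {0} :=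
      hns self_mem_nhdsWithin
    have hne : ∀ᶠ n in Filter.atTop, ns n ≠ 0 := hns'.eventually_ne ha0
    have hmemS : ∀ᶠ n in Filter.atTop, ns n ∈ S := by
      filter_upwards [hmem, hne] with n h1 h2
      rcases h1 with h1 | h1
      · exact h1
      · exact absurd h1 h2
    have hnorm : ∀ᶠ n in Filter.atTop, ‖φ (ns n)‖ = ‖ns n‖ := by
      filter_upwards [hmemS] with n hn using (hφ _ hn).1
    have happ : ∀ᶠ n in Filter.atTop, φ (ns n) (ns n) = ‖ns n‖ ^ 2 := by
      filter_upwards [hmemS] with n hn using (hφ _ hn).2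
    have hnorm_tendsto : Filter.Tendsto (fun n => ‖ns n‖) Filter.atTop (nhds ‖a‖) :=
      (continuous_norm.tendsto a).comp hns'
    -- the values φ (ns n) are eventually in the compact closed ball of radius ‖a‖ + 1
    have hball : ∀ᶠ n in Filter.atTop, φ (ns n) ∈ Metric.closedBall (0 : X →L[ℝ] ℝ) (‖a‖ + 1) := by
      have : ∀ᶠ n in Filter.atTop, ‖ns n‖ ≤ ‖a‖ + 1 :=
        hnorm_tendsto.eventually (eventually_le_nhds (by linarith))
      filter_upwards [hnorm, this] with n h1 h2
      rw [Metric.mem_closedBall, dist_zero_right, h1]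
      exact h2
    have hcompact : IsCompact (Metric.closedBall (0 : X →L[ℝ] ℝ) (‖a‖ + 1)) :=
      isCompact_closedBall _ _
    obtain ⟨f, -, ms, hms_mono, hms_tendsto⟩ :=
      hcompact.tendsto_subseq' hball.frequently
    have hms_at : Filter.Tendsto ms Filter.atTop Filter.atTop :=
      hms_mono.tendsto_atTop
    -- f satisfies the defining conditions
    have hfa_norm : ‖f‖ = ‖a‖ := by
      have h1 : Filter.Tendsto (fun n => ‖φ (ns (ms n))‖) Filter.atTop (nhds ‖f‖) :=
        (continuous_norm.tendsto f).comp hms_tendsto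
      have h2 : Filter.Tendsto (fun n => ‖φ (ns (ms n))‖) Filter.atTop (nhds ‖a‖) := by
        have := (hnorm_tendsto.comp hms_at)
        apply this.congr'
        filter_upwards [hms_at.eventually hnorm] with n hn using hn.symm
      exact tendsto_nhds_unique h1 h2
    have hfa_app : f a = ‖a‖ ^ 2 := by
      have hxs : Filter.Tendsto (fun n => ns (ms n)) Filter.atTop (nhds a) :=
        hns'.comp hms_at
      have h1 : Filter.Tendsto (fun n => φ (ns (ms n)) (ns (ms n))) Filter.atTop (nhds (f a)) := by
        have hcont : Continuous fun p : (X →L[ℝ] ℝ) × X => p.1 p.2 :=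
          isBoundedBilinearMap_apply.continuous
        exact (hcont.tendsto (f, a)).comp (hms_tendsto.prodMk_nhds hxs)
      have h2 : Filter.Tendsto (fun n => φ (ns (ms n)) (ns (ms n))) Filter.atTop
          (nhds (‖a‖ ^ 2)) := by
        have hpow : Filter.Tendsto (fun n => ‖ns (ms n)‖ ^ 2) Filter.atTop (nhds (‖a‖ ^ 2)) :=
          (hnorm_tendsto.comp hms_at).pow 2
        apply hpow.congr'
        filter_upwards [hms_at.eventually happ] with n hn using hn.symm
      exact tendsto_nhds_unique h1 h2
    -- by uniqueness, f = φ a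
    have hf_eq : f = φ a := by
      obtain ⟨g, -, hgu⟩ := haS.2
      rw [hgu f ⟨hfa_norm, hfa_app⟩, hgu (φ a) hφa]
    exact ⟨ms, hf_eq ▸ hms_tendsto⟩
  · -- a = 0
    simp only [Set.mem_singleton_iff] at ha0
    subst ha0
    rw [ContinuousWithinAt, hφ0]
    rw [tendsto_zero_iff_norm_tendsto_zero]
    apply squeeze_zero' (Filter.Eventually.of_forall fun x => norm_nonneg _)
    · exact eventually_nhdsWithin_of_forall hnorm_le
    · have : Filter.Tendsto (fun x : X => ‖x‖) (nhdsWithin 0 (S ∪ {0})) (nhds ‖(0 : X)‖) :=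
        (continuous_norm.tendsto 0).mono_left nhdsWithin_le_nhds
      simpa using this
end

section
/- Let G be a finite graph and X a finite-dimensional real normed space. The rigidity map f_G : X^{V(G)} → ℝ^{E(G)}, p ↦ (‖p_v − p_w‖)_{vw ∈ E(G)}, is differentiable at p if and only if p_v − p_w is a smooth point of X for every edge vw ∈ E(G); in that case its derivative sends x to (φ_{v,w}(x_v − x_w))_{vw ∈ E(G)}, where φ_{v,w} is the support functional of the unit vector (p_v − p_w)/‖p_v − p_w‖. -/
/-!
A support functional `φ` of `y` satisfies `φ ≤ ‖·‖` with equality at `y`, so `‖·‖ - φ` attains its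
minimum at `y`; hence if the norm is differentiable at `y`, its derivative there is `φ`. The
rigidity map is differentiable iff each coordinate `q ↦ ‖q v - q w‖` is, and the latter is
differentiable at `p` iff the norm is differentiable at `p v - p w`: one direction is the chain
rule, the other composes with the section `y ↦ update p v (y + p w)` of `q ↦ q v - q w`.
-/

open ContinuousLinearMap

lemma DifferentiableAt.hasFDerivAt_norm_of_opNorm_le_one {X : Type*} [NormedAddCommGroup X]
    [NormedSpace ℝ X] {φ : X →L[ℝ] ℝ} {y : X}
    (hd : DifferentiableAt ℝ (fun x : X => ‖x‖) y) (hφ : ‖φ‖ ≤ 1) (hφy : φ y = ‖y‖) :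
    HasFDerivAt (fun x : X => ‖x‖) φ y := by
  have hmin : IsLocalMin (fun x : X => ‖x‖ - φ x) y := by
    refine Filter.Eventually.of_forall fun x => ?_
    have : φ x ≤ ‖x‖ := by
      simpa using (le_abs_self (φ x)).trans (φ.le_of_opNorm_le hφ x)
    simp only [hφy, sub_self]
    linarith
  have hzero := hmin.hasFDerivAt_eq_zero (hd.hasFDerivAt.sub φ.hasFDerivAt)
  simpa [sub_eq_zero.mp hzero] using hd.hasFDerivAt

section EdgeDifference

variable {𝕜 X F V : Type*} [NontriviallyNormedField 𝕜] [NormedAddCommGroup X] [NormedSpace 𝕜 X]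
  [NormedAddCommGroup F] [NormedSpace 𝕜 F] [Fintype V] {f : X → F} {p : V → X}

lemma HasFDerivAt.comp_apply_sub {f' : X →L[𝕜] F} (i j : V) (hf : HasFDerivAt f f' (p i - p j)) :
    HasFDerivAt (fun q : V → X => f (q i - q j))
      (f'.comp ((proj i : (V → X) →L[𝕜] X) - proj j)) p :=
  hf.comp p ((proj i : (V → X) →L[𝕜] X) - proj j).hasFDerivAt

lemma differentiableAt_apply_sub_iff {i j : V} (hij : i ≠ j) :
    DifferentiableAt 𝕜 (fun q : V → X => f (q i - q j)) p ↔ DifferentiableAt 𝕜 f (p i - p j) := by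
  classical
  refine ⟨fun h => ?_, fun h => (h.hasFDerivAt.comp_apply_sub i j).differentiableAt⟩
  set s : X → V → X := fun y => Function.update p i (y + p j)
  have hs : DifferentiableAt 𝕜 s (p i - p j) :=
    ((hasFDerivAt_update (𝕜 := 𝕜) p (i := i) (p i - p j + p j)).comp (p i - p j)
      ((hasFDerivAt_id _).add_const (p j))).differentiableAt
  have hsp : s (p i - p j) = p := by simp [s]
  have hfs : (fun q : V → X => f (q i - q j)) ∘ s = f := by
    funext y
    simp [s, hij.symm]
  rw [← hfs]
  exact (hsp ▸ h).comp _ hs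

end EdgeDifference

theorem stmt_13_general (X : Type*) [NormedAddCommGroup X] [NormedSpace ℝ X]
    (V : Type*) [Fintype V]
    (E : Finset (V × V)) (hE : ∀ e ∈ E, e.1 ≠ e.2) (p : V → X) :
    (DifferentiableAt ℝ (fun q : V → X => fun e : ↥E => ‖q e.val.1 - q e.val.2‖) p ↔
      ∀ e ∈ E, DifferentiableAt ℝ (fun x : X => ‖x‖) (p e.1 - p e.2)) ∧
    ((∀ e ∈ E, DifferentiableAt ℝ (fun x : X => ‖x‖) (p e.1 - p e.2)) →
      ∀ φ : ↥E → (X →L[ℝ] ℝ),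
        (∀ e : ↥E, ‖φ e‖ = 1 ∧ φ e (p e.val.1 - p e.val.2) = ‖p e.val.1 - p e.val.2‖) →
        ∀ x : V → X,
          fderiv ℝ (fun q : V → X => fun e : ↥E => ‖q e.val.1 - q e.val.2‖) p x
            = fun e : ↥E => φ e (x e.val.1 - x e.val.2)) := by
  refine ⟨?_, fun h φ hφ x => ?_⟩
  · rw [differentiableAt_pi, Subtype.forall]
    exact forall₂_congr fun e he => differentiableAt_apply_sub_iff (hE e he)
  · have hderiv := hasFDerivAt_pi.2 fun e : ↥E =>
      ((h e e.2).hasFDerivAt_norm_of_opNorm_le_one (hφ e).1.le (hφ e).2).comp_apply_sub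
        e.val.1 e.val.2
    rw [hderiv.fderiv]
    rfl

/-- The rigidity map is differentiable at `p` iff every edge vector is a smooth point;
in that case its derivative is given by the support functionals of the unit edge
vectors. -/
theorem stmt_13 (X : Type*) [NormedAddCommGroup X] [NormedSpace ℝ X]
    [FiniteDimensional ℝ X] (V : Type*) [Fintype V]
    (E : Finset (V × V)) (hE : ∀ e ∈ E, e.1 ≠ e.2) (p : V → X) :
    (DifferentiableAt ℝ (fun q : V → X => fun e : ↥E => ‖q e.val.1 - q e.val.2‖) p ↔
      ∀ e ∈ E, DifferentiableAt ℝ (fun x : X => ‖x‖) (p e.1 - p e.2)) ∧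
    ((∀ e ∈ E, DifferentiableAt ℝ (fun x : X => ‖x‖) (p e.1 - p e.2)) →
      ∀ φ : ↥E → (X →L[ℝ] ℝ),
        (∀ e : ↥E, ‖φ e‖ = 1 ∧ φ e (p e.val.1 - p e.val.2) = ‖p e.val.1 - p e.val.2‖) →
        ∀ x : V → X,
          fderiv ℝ (fun q : V → X => fun e : ↥E => ‖q e.val.1 - q e.val.2‖) p x
            = fun e : ↥E => φ e (x e.val.1 - x e.val.2)) :=
  stmt_13_general X V E hE p
end

section
/- For a finite graph G in a finite-dimensional real normed space, the set of well-positioned placements W(G) is dense in X^{V(G)} and its complement has Lebesgue measure zero. -/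
open MeasureTheory

/-- For a finite graph the set of well-positioned placements is dense in `X^{V}` and its
complement is Lebesgue-null. -/
theorem stmt_14 (X : Type*) [NormedAddCommGroup X] [NormedSpace ℝ X]
    [FiniteDimensional ℝ X] [Nontrivial X] [MeasurableSpace X] [BorelSpace X]
    (V : Type*) [Fintype V] (E : Finset (V × V)) (hE : ∀ e ∈ E, e.1 ≠ e.2)
    (μ : MeasureTheory.Measure (V → X)) [μ.IsAddHaarMeasure] :
    Dense {p : V → X | ∀ e ∈ E, DifferentiableAt ℝ (fun x : X => ‖x‖) (p e.1 - p e.2)} ∧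
      μ {p : V → X | ∀ e ∈ E,
          DifferentiableAt ℝ (fun x : X => ‖x‖) (p e.1 - p e.2)}ᶜ = 0 := by
  classical
  -- a reference Haar measure on `X`
  let ν : Measure X := (Module.Basis.ofVectorSpace ℝ X).addHaar
  have hνHaar : ν.IsAddHaarMeasure := by infer_instance
  have hsmeas : MeasurableSet {x : X | DifferentiableAt ℝ (fun x : X => ‖x‖) x} :=
    measurableSet_of_differentiableAt ℝ _
  have key : ∀ᵐ p ∂μ, ∀ e ∈ E, DifferentiableAt ℝ (fun x : X => ‖x‖) (p e.1 - p e.2) := by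
    rw [Filter.eventually_all_finset]
    intro e he
    -- the linear map `p ↦ p e.1 - p e.2`
    let L : (V → X) →ₗ[ℝ] X := (LinearMap.proj e.1 : (V → X) →ₗ[ℝ] X) - (LinearMap.proj e.2 : (V → X) →ₗ[ℝ] X)
    have hL : Function.Surjective L := by
      intro x
      refine ⟨Function.update (0 : V → X) e.1 x, ?_⟩
      have h1 : Function.update (0 : V → X) e.1 x e.1 = x := Function.update_self _ _ _
      have h2 : Function.update (0 : V → X) e.1 x e.2 = 0 :=
        Function.update_of_ne (Ne.symm (hE e he)) _ _
      show Function.update (0 : V → X) e.1 x e.1 - Function.update (0 : V → X) e.1 x e.2 = x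
      rw [h1, h2, sub_zero]
    have := (MeasureTheory.ae_comp_linearMap_mem_iff (L := L) μ ν hL hsmeas).2
      (ae_differentiableAt_norm (μ := ν))
    filter_upwards [this] with p hp
    exact hp
  refine ⟨Measure.dense_of_ae key, ?_⟩
  have := key
  rw [MeasureTheory.ae_iff] at this
  rw [Set.compl_setOf]
  exact this
end

section
/- Let x₀ be a nonzero point of a d-dimensional real normed space X and O(x₀) = {T(x₀) : T ∈ Isolin(X)} its orbit under the linear isometry group. If O(x₀) equals the entire sphere S_{‖x₀‖}(0) (i.e., the linear isometry group acts transitively on spheres), then X is a Euclidean space (the norm comes from an inner product). Conversely, if X is Euclidean then O(x₀) = S_{‖x₀‖}(0). -/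
/-!
The linear isometries of a finite-dimensional normed space form a compact group. Averaging the
square of some Euclidean norm over it against Haar measure yields an isometry-invariant,
2-homogeneous, positive function `Q` satisfying the parallelogram law. If the isometries act
transitively on the sphere through `x₀`, then `Q` is constant on every sphere, so
`Q = c ‖·‖²` with `c > 0`; hence `‖·‖` satisfies the parallelogram law and comes from an inner
product (Jordan–von Neumann). Conversely, in an inner product space the reflection in
`(x - y)ᗮ` maps `x` to `y` whenever `‖x‖ = ‖y‖`.
-/
open MeasureTheory Topology

section

variable (X : Type*) [NormedAddCommGroup X] [NormedSpace ℝ X]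

/-- `Isolin(X)`, realised inside the units of `X →L[ℝ] X` so that it inherits a topology. -/
def isometryUnits : Subgroup (X →L[ℝ] X)ˣ where
  carrier := {u | ∀ x : X, ‖u • x‖ = ‖x‖}
  one_mem' := by simp
  mul_mem' {u v} hu hv x := by rw [mul_smul, hu, hv]
  inv_mem' {u} hu x := by rw [← hu, smul_inv_smul]

variable {X}

theorem exists_mem_isometryUnits [FiniteDimensional ℝ X] {A : X →L[ℝ] X}
    (hA : ∀ x, ‖A x‖ = ‖x‖) : ∃ u ∈ isometryUnits X, (u : X →L[ℝ] X) = A := by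
  let e := LinearIsometry.toLinearIsometryEquiv ⟨A.toLinearMap, hA⟩ rfl
  obtain ⟨u, rfl⟩ : ∃ u : (X →L[ℝ] X)ˣ, (u : X →L[ℝ] X) = A :=
    ⟨(ContinuousLinearEquiv.unitsEquiv ℝ X).symm e.toContinuousLinearEquiv, rfl⟩
  exact ⟨u, hA, rfl⟩

theorem image_val_isometryUnits [FiniteDimensional ℝ X] :
    Units.val '' (isometryUnits X : Set (X →L[ℝ] X)ˣ) = {A | ∀ x, ‖A x‖ = ‖x‖} := by
  ext A
  constructor
  · rintro ⟨u, hu, rfl⟩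
    exact hu
  · intro hA
    obtain ⟨u, hu, rfl⟩ := exists_mem_isometryUnits hA
    exact ⟨u, hu, rfl⟩

theorem isCompact_isometryUnits [FiniteDimensional ℝ X] :
    IsCompact (isometryUnits X : Set (X →L[ℝ] X)ˣ) := by
  rw [Units.isOpenEmbedding_val.isCompact_iff, image_val_isometryUnits]
  refine Metric.isCompact_of_isClosed_isBounded ?_ ?_
  · simp only [Set.ofPred_forall]
    exact isClosed_iInter fun x ↦ isClosed_eq (continuous_norm.comp (by fun_prop)) continuous_const
  · refine (Metric.isBounded_closedBall (x := (0 : X →L[ℝ] X)) (r := 1)).subset fun A hA ↦ ?_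
    rw [Metric.mem_closedBall, dist_zero_right]
    exact A.opNorm_le_bound zero_le_one fun x ↦ by rw [hA, one_mul]

noncomputable section Average

variable [FiniteDimensional ℝ X]

instance : CompactSpace (isometryUnits X) := isCompact_iff_compactSpace.mp isCompact_isometryUnits

instance : MeasurableSpace (isometryUnits X) := borel _

instance : BorelSpace (isometryUnits X) := ⟨rfl⟩

/-- `g⁻¹` rather than `g`, so that invariance only needs left-invariance of Haar measure. -/
def isometryAverage (φ : X → ℝ) (x : X) : ℝ :=
  ∫ g : isometryUnits X, φ (g⁻¹ • x) ∂Measure.haar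

variable {φ : X → ℝ}

theorem isometryAverage_smul (u : isometryUnits X) (x : X) :
    isometryAverage φ (u • x) = isometryAverage φ x := by
  simp only [isometryAverage]
  calc ∫ g : isometryUnits X, φ (g⁻¹ • u • x) ∂Measure.haar
      = ∫ g : isometryUnits X, φ ((u⁻¹ * g)⁻¹ • x) ∂Measure.haar := by
        simp only [mul_inv_rev, inv_inv, mul_smul]
    _ = ∫ g : isometryUnits X, φ (g⁻¹ • x) ∂Measure.haar :=
        integral_mul_left_eq_self (fun g : isometryUnits X ↦ φ (g⁻¹ • x)) u⁻¹

theorem isometryAverage_real_smul (hφ : ∀ (a : ℝ) x, φ (a • x) = a ^ 2 * φ x) (a : ℝ) (x : X) :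
    isometryAverage φ (a • x) = a ^ 2 * isometryAverage φ x := by
  simp only [isometryAverage, smul_comm _ a, hφ, integral_const_mul]

theorem integrable_comp_inv_smul (hφ : Continuous φ) (x : X) :
    Integrable (fun g : isometryUnits X ↦ φ (g⁻¹ • x)) Measure.haar := by
  have hinv_smul : Continuous fun g : isometryUnits X ↦ g⁻¹ • x :=
    (ContinuousLinearMap.apply ℝ X x).continuous.comp
      (Units.continuous_val.comp (continuous_subtype_val.comp continuous_inv))
  exact (hφ.comp hinv_smul).integrable_of_hasCompactSupport (.of_compactSpace _)

theorem isometryAverage_add_add_sub (hφc : Continuous φ)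
    (hφ : ∀ x y, φ (x + y) + φ (x - y) = 2 * φ x + 2 * φ y) (x y : X) :
    isometryAverage φ (x + y) + isometryAverage φ (x - y) =
      2 * isometryAverage φ x + 2 * isometryAverage φ y := by
  have hint := integrable_comp_inv_smul hφc
  simp only [isometryAverage]
  rw [← integral_add (hint _) (hint _), ← integral_const_mul, ← integral_const_mul,
    ← integral_add ((hint _).const_mul 2) ((hint _).const_mul 2)]
  simp only [smul_add, smul_sub, hφ]

theorem isometryAverage_pos (hφc : Continuous φ) (hφ : ∀ x, x ≠ 0 → 0 < φ x) {x : X}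
    (hx : x ≠ 0) : 0 < isometryAverage φ x := by
  have hpos (g : isometryUnits X) : 0 < φ (g⁻¹ • x) := hφ _ ((smul_ne_zero_iff_ne _).mpr hx)
  rw [isometryAverage, integral_pos_iff_support_of_nonneg (fun g ↦ (hpos g).le)
    (integrable_comp_inv_smul hφc x), Function.support_eq_univ fun g ↦ (hpos g).ne']
  exact isOpen_univ.measure_pos _ Set.univ_nonempty

end Average

theorem exists_isometryUnits_invariant_form [FiniteDimensional ℝ X] :
    ∃ Q : X → ℝ, (∀ x y, Q (x + y) + Q (x - y) = 2 * Q x + 2 * Q y) ∧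
      (∀ (a : ℝ) x, Q (a • x) = a ^ 2 * Q x) ∧ (∀ x, x ≠ 0 → 0 < Q x) ∧
      ∀ u ∈ isometryUnits X, ∀ x, Q (u • x) = Q x := by
  let φ : X → ℝ := fun x ↦ ‖toEuclidean x‖ ^ 2
  have hφc : Continuous φ := by fun_prop
  have hφpar (x y : X) : φ (x + y) + φ (x - y) = 2 * φ x + 2 * φ y := by
    simp only [φ, map_add, map_sub]
    linear_combination parallelogram_law_with_norm ℝ (toEuclidean x) (toEuclidean y)
  have hφsmul (a : ℝ) (x : X) : φ (a • x) = a ^ 2 * φ x := by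
    simp only [φ, map_smul, norm_smul, mul_pow, Real.norm_eq_abs, sq_abs]
  have hφpos (x : X) (hx : x ≠ 0) : 0 < φ x :=
    pow_pos (norm_pos_iff.mpr (by simpa using hx)) 2
  exact ⟨isometryAverage φ, isometryAverage_add_add_sub hφc hφpar,
    isometryAverage_real_smul hφsmul, fun x ↦ isometryAverage_pos hφc hφpos,
    fun u hu ↦ isometryAverage_smul ⟨u, hu⟩⟩

theorem mul_norm_sq_eq_of_forall_norm_eq {Q : X → ℝ} (hQ : ∀ (a : ℝ) x, Q (a • x) = a ^ 2 * Q x)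
    {x₀ : X} (hsphere : ∀ y, ‖y‖ = ‖x₀‖ → Q y = Q x₀) (x : X) :
    Q x₀ * ‖x‖ ^ 2 = ‖x₀‖ ^ 2 * Q x := by
  by_cases hx : x = 0
  · have hQ0 : Q 0 = 0 := by simpa using hQ 0 0
    simp [hx, hQ0]
  · have hx' : ‖x‖ ≠ 0 := norm_ne_zero_iff.mpr hx
    set a := ‖x₀‖ / ‖x‖
    have hax : ‖a • x‖ = ‖x₀‖ := by
      rw [norm_smul, Real.norm_of_nonneg (by positivity), div_mul_cancel₀ _ hx']
    rw [← hsphere _ hax, hQ, div_pow]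
    field_simp

theorem parallelogram_norm_of_forall_norm_eq {Q : X → ℝ}
    (hpar : ∀ x y, Q (x + y) + Q (x - y) = 2 * Q x + 2 * Q y)
    (hQ : ∀ (a : ℝ) x, Q (a • x) = a ^ 2 * Q x) {x₀ : X} (hQx₀ : Q x₀ ≠ 0)
    (hsphere : ∀ y, ‖y‖ = ‖x₀‖ → Q y = Q x₀) (x y : X) :
    ‖x + y‖ * ‖x + y‖ + ‖x - y‖ * ‖x - y‖ = 2 * (‖x‖ * ‖x‖ + ‖y‖ * ‖y‖) := by
  have h := mul_norm_sq_eq_of_forall_norm_eq hQ hsphere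
  apply mul_left_cancel₀ hQx₀
  linear_combination h (x + y) + h (x - y) - 2 * h x - 2 * h y + ‖x₀‖ ^ 2 * hpar x y

end

/-- The orbit of a nonzero point under the linear isometry group equals the whole sphere
iff the norm comes from an inner product. -/
theorem stmt_18 (X : Type*) [NormedAddCommGroup X] [NormedSpace ℝ X]
    [FiniteDimensional ℝ X] (x₀ : X) (hx₀ : x₀ ≠ 0) :
    {y : X | ∃ T : X →L[ℝ] X, Isometry T ∧ Function.Surjective T ∧ T x₀ = y}
        = Metric.sphere (0 : X) ‖x₀‖ ↔
      Nonempty (InnerProductSpace ℝ X) := by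
  constructor
  · intro h
    obtain ⟨Q, hpar, hsmul, hpos, hinv⟩ := exists_isometryUnits_invariant_form (X := X)
    refine ⟨.ofNorm ℝ (parallelogram_norm_of_forall_norm_eq hpar hsmul (hpos x₀ hx₀).ne' ?_)⟩
    intro y hy
    obtain ⟨T, hT, -, rfl⟩ := h.ge (mem_sphere_zero_iff_norm.mpr hy)
    obtain ⟨u, hu, rfl⟩ := exists_mem_isometryUnits (hT.norm_map_of_map_zero (map_zero T))
    exact hinv u hu x₀
  · rintro ⟨inst⟩
    -- `inst` may carry a different `ℝ`-module structure, so rebuild one over the given smul.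
    let _ : InnerProductSpace ℝ X := .ofNorm ℝ fun x y ↦ by
      simpa only [sq] using @parallelogram_law_with_norm ℝ X _ _ inst x y
    ext y
    rw [Set.mem_ofPred_eq, mem_sphere_zero_iff_norm]
    constructor
    · rintro ⟨T, hT, -, rfl⟩
      exact hT.norm_map_of_map_zero (map_zero T) x₀
    · intro hy
      let R := Submodule.reflection (ℝ ∙ (x₀ - y))ᗮ
      exact ⟨R.toContinuousLinearEquiv, R.isometry, R.surjective, Submodule.reflection_sub hy.symm⟩
end
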